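/- arXiv:2112.09317 — 2 statements merged into one kernel-verified Lean document; each statement's English description precedes it below -/
import Mathlib

section
/- Let G be a finite insoluble group such that all proper subgroups of every maximal subgroup of G are soluble, and suppose G has no insoluble proper normal subgroup. If N is a maximal normal soluble subgroup of G with N ≠ G, then G/N is a nonabelian simple group. -/
theorem QuotientGroup.isSimpleGroup_of_forall_normal_le {G : Type*} [Group G] (N : Subgroup G)
    [N.Normal] [Nontrivial (G ⧸ N)]
    (h : ∀ K : Subgroup G, K.Normal → N ≤ K → K = N ∨ K = ⊤) : IsSimpleGroup (G ⧸ N) := by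
  refine ⟨fun H hH => ?_⟩
  have hinj := Subgroup.comap_injective (QuotientGroup.mk'_surjective N)
  have hNK : N ≤ H.comap (QuotientGroup.mk' N) := by
    simpa only [QuotientGroup.ker_mk'] using MonoidHom.ker_le_comap (QuotientGroup.mk' N) H
  rcases h _ (hH.comap _) hNK with hK | hK
  · left
    apply hinj
    rw [hK, MonoidHom.comap_bot, QuotientGroup.ker_mk']
  · right
    apply hinj
    rw [hK, Subgroup.comap_top]

namespace Group

variable {G : Type*} [Group G]

theorem not_isSolvable_quotient (hG : ¬ IsSolvable G) (N : Subgroup G) [N.Normal]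
    (hN : IsSolvable N) : ¬ IsSolvable (G ⧸ N) :=
  fun hQ => hG ((isSolvable_iff_subgroup_quotient N).2 ⟨hN, hQ⟩)

theorem nontrivial_of_not_isSolvable (hG : ¬ IsSolvable G) : Nontrivial G :=
  not_subsingleton_iff_nontrivial.1 fun _ => hG inferInstance

theorem exists_mul_ne_mul_of_not_isSolvable (hG : ¬ IsSolvable G) : ∃ a b : G, a * b ≠ b * a := by
  by_contra! hcomm
  exact hG (isSolvable_of_comm hcomm)

end Group

theorem stmt_6_general (G : Type*) [Group G]
    (hG : ¬ IsSolvable G)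
    (hnorm : ∀ K : Subgroup G, K.Normal → K ≠ ⊤ → IsSolvable K)
    (N : Subgroup G) [hN : N.Normal] (hNs : IsSolvable N)
    (hNmax : ∀ K : Subgroup G, K.Normal → IsSolvable K → ¬ (N < K)) :
    IsSimpleGroup (G ⧸ N) ∧ ∃ a b : G ⧸ N, a * b ≠ b * a := by
  have hQ := Group.not_isSolvable_quotient hG N hNs
  have := Group.nontrivial_of_not_isSolvable hQ
  refine ⟨QuotientGroup.isSimpleGroup_of_forall_normal_le N fun K hK hNK => ?_,
    Group.exists_mul_ne_mul_of_not_isSolvable hQ⟩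
  by_cases hKtop : K = ⊤
  · exact Or.inr hKtop
  · exact Or.inl (hNK.eq_or_lt.resolve_right (hNmax K hK (hnorm K hK hKtop))).symm

theorem stmt_6 (G : Type*) [Group G] [Finite G]
    (hG : ¬ IsSolvable G)
    (hyp : ∀ M : Subgroup G, IsCoatom M → ∀ H : Subgroup M, H ≠ ⊤ → IsSolvable H)
    (hnorm : ∀ K : Subgroup G, K.Normal → K ≠ ⊤ → IsSolvable K)
    (N : Subgroup G) [hN : N.Normal] (hNs : IsSolvable N) (hNne : N ≠ ⊤)
    (hNmax : ∀ K : Subgroup G, K.Normal → IsSolvable K → ¬ (N < K)) :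
    IsSimpleGroup (G ⧸ N) ∧ ∃ a b : G ⧸ N, a * b ≠ b * a :=
  stmt_6_general G hG hnorm N (hN := hN) hNs hNmax
end

section
/- Let G be a finite group, N ⊴ G soluble, and suppose every maximal subgroup of G contains N. If G/N is a nonabelian simple group all of whose proper subgroups are soluble, then every proper subgroup of G is soluble. -/
/-!
Since `N` lies in every maximal subgroup, `N ≤ Φ(G)`, and Frattini elements are non-generating:
a proper subgroup `H` cannot satisfy `HN = G`, so its image in `G/N` is proper, hence soluble.
Then `H` is an extension of `H ∩ N ≤ N` by that image, so it is soluble.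
-/

namespace Subgroup

variable {G G' : Type*} [Group G] [Group G']

theorem eq_top_of_map_eq_top_of_ker_le_frattini [IsCoatomic (Subgroup G)] {f : G →* G'}
    (hf : f.ker ≤ frattini G) {H : Subgroup G} (hH : H.map f = ⊤) : H = ⊤ :=
  frattini_nongenerating <| top_le_iff.mp <|
    calc ⊤ = H ⊔ f.ker := by rw [← comap_map_eq, hH, comap_top]
      _ ≤ H ⊔ frattini G := sup_le_sup_left hf H

instance isSolvable_subgroupOf (K H : Subgroup G) [Group.IsSolvable K] :
    Group.IsSolvable (K.subgroupOf H) :=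
  Group.isSolvable_of_isSolvable_injective
    (f := (H.subtype.comp (K.subgroupOf H).subtype).codRestrict K fun x => x.2)
    fun _ _ h => Subtype.ext <| Subtype.ext <| congrArg (Subtype.val : K → G) h

theorem isSolvable_of_isSolvable_map (f : G →* G') [Group.IsSolvable f.ker] (H : Subgroup G)
    [hHf : Group.IsSolvable (H.map f)] : Group.IsSolvable H := by
  rw [← MonoidHom.domRestrict_range] at hHf
  have : Group.IsSolvable (f.domRestrict H).ker := isSolvable_subgroupOf f.ker H
  exact Group.isSolvable_of_ker_le_range (f.domRestrict H).ker.subtype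
    (f.domRestrict H).rangeRestrict (by rw [MonoidHom.ker_rangeRestrict, range_subtype])

end Subgroup

theorem stmt_17_general (G : Type*) [Group G] [Finite G]
    (N : Subgroup G) [hN : N.Normal] (hNs : IsSolvable N)
    (hle : ∀ M : Subgroup G, IsCoatom M → N ≤ M)
    (hsol : ∀ H : Subgroup (G ⧸ N), H ≠ ⊤ → IsSolvable H) :
    ∀ H : Subgroup G, H ≠ ⊤ → IsSolvable H := by
  intro H hH
  have hN_le_frattini : (QuotientGroup.mk' N).ker ≤ frattini G := by
    rw [QuotientGroup.ker_mk']
    exact le_iInf₂ hle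
  have : Group.IsSolvable (QuotientGroup.mk' N).ker := by rwa [QuotientGroup.ker_mk']
  have hmap_ne_top : H.map (QuotientGroup.mk' N) ≠ ⊤ :=
    mt (Subgroup.eq_top_of_map_eq_top_of_ker_le_frattini hN_le_frattini) hH
  have : Group.IsSolvable (H.map (QuotientGroup.mk' N)) := hsol _ hmap_ne_top
  exact Subgroup.isSolvable_of_isSolvable_map (QuotientGroup.mk' N) H

theorem stmt_17 (G : Type*) [Group G] [Finite G]
    (N : Subgroup G) [hN : N.Normal] (hNs : IsSolvable N)
    (hle : ∀ M : Subgroup G, IsCoatom M → N ≤ M)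
    (hsimple : IsSimpleGroup (G ⧸ N))
    (hnonab : ∃ a b : G ⧸ N, a * b ≠ b * a)
    (hsol : ∀ H : Subgroup (G ⧸ N), H ≠ ⊤ → IsSolvable H) :
    ∀ H : Subgroup G, H ≠ ⊤ → IsSolvable H :=
  stmt_17_general G N (hN := hN) hNs hle hsol
end
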